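/- The 2-dimensional vector space P with basis {e₁, e₂}, trilinear product μ(e₁,e₁,e₁) = e₂ (all other basis products zero), and coproduct Δ(e₁) = e₂⊗e₂⊗e₂, Δ(e₂) = 0, forms a partially associative 3-ary infinitesimal bialgebra. -/
import Mathlib


open TensorProduct

open TensorProduct in
/-- `(Δ ⊗ id ⊗ id) ∘ Δ`, valued in the left-associated 5-fold tensor power. -/
noncomputable def coD1 {K A : Type*} [Field K] [AddCommGroup A] [Module K A]
    (Δ : A →ₗ[K] (A ⊗[K] A) ⊗[K] A) :
    A →ₗ[K] (((A ⊗[K] A) ⊗[K] A) ⊗[K] A) ⊗[K] A :=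
  (map (map Δ LinearMap.id) LinearMap.id) ∘ₗ Δ

open TensorProduct in
/-- `(id ⊗ Δ ⊗ id) ∘ Δ`, valued in the left-associated 5-fold tensor power. -/
noncomputable def coD2 {K A : Type*} [Field K] [AddCommGroup A] [Module K A]
    (Δ : A →ₗ[K] (A ⊗[K] A) ⊗[K] A) :
    A →ₗ[K] (((A ⊗[K] A) ⊗[K] A) ⊗[K] A) ⊗[K] A :=
  (map ((map (TensorProduct.assoc K A A A).symm.toLinearMap LinearMap.id) ∘ₗ
      (TensorProduct.assoc K A (A ⊗[K] A) A).symm.toLinearMap) LinearMap.id) ∘ₗ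
    (map (map LinearMap.id Δ) LinearMap.id) ∘ₗ Δ

open TensorProduct in
/-- `(id ⊗ id ⊗ Δ) ∘ Δ`, valued in the left-associated 5-fold tensor power. -/
noncomputable def coD3 {K A : Type*} [Field K] [AddCommGroup A] [Module K A]
    (Δ : A →ₗ[K] (A ⊗[K] A) ⊗[K] A) :
    A →ₗ[K] (((A ⊗[K] A) ⊗[K] A) ⊗[K] A) ⊗[K] A :=
  (map (TensorProduct.assoc K (A ⊗[K] A) A A).symm.toLinearMap LinearMap.id) ∘ₗ
    (TensorProduct.assoc K (A ⊗[K] A) (A ⊗[K] A) A).symm.toLinearMap ∘ₗ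
    (map LinearMap.id Δ) ∘ₗ Δ
/-- The middle multiplication `M_μ(x,y)(z) = μ(x,z,y)` as a linear map. -/
noncomputable def Mmul {K A : Type*} [Field K] [AddCommGroup A] [Module K A]
    (μ : A →ₗ[K] A →ₗ[K] A →ₗ[K] A) (x y : A) : A →ₗ[K] A where
  toFun z := μ x z y
  map_add' a b := by simp
  map_smul' c a := by simp

/-- The right multiplication `R_μ(x,y)(z) = μ(z,x,y)` as a linear map. -/
noncomputable def Rmul {K A : Type*} [Field K] [AddCommGroup A] [Module K A]
    (μ : A →ₗ[K] A →ₗ[K] A →ₗ[K] A) (x y : A) : A →ₗ[K] A where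
  toFun z := μ z x y
  map_add' a b := by simp
  map_smul' c a := by simp
open TensorProduct in
/-- The infinitesimal bialgebra compatibility condition
`Δμ(x,y,z) = (L_μ(x,y)⊗id⊗id)Δ(z) + (id⊗M_μ(x,z)⊗id)Δ(y) + (id⊗id⊗R_μ(y,z))Δ(x)`. -/
def Compat {K A : Type*} [Field K] [AddCommGroup A] [Module K A]
    (μ : A →ₗ[K] A →ₗ[K] A →ₗ[K] A) (Δ : A →ₗ[K] (A ⊗[K] A) ⊗[K] A) : Prop :=
  ∀ x y z : A, Δ (μ x y z) =
    (map (map (μ x y) LinearMap.id) LinearMap.id) (Δ z)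
      + (map (map LinearMap.id (Mmul μ x z)) LinearMap.id) (Δ y)
      + (map LinearMap.id (Rmul μ y z)) (Δ x)

noncomputable def e₁ : Fin 2 → ℚ := ![1, 0]
noncomputable def e₂ : Fin 2 → ℚ := ![0, 1]
noncomputable def e : Fin 2 → (Fin 2 → ℚ) := ![e₁, e₂]

set_option synthInstance.maxHeartbeats 1000000 in
set_option maxHeartbeats 1000000 in
/-- the 2-dimensional space with μ(e₁,e₁,e₁)=e₂ (other basis products zero),
Δ(e₁)=e₂⊗e₂⊗e₂, Δ(e₂)=0 is a partially associative 3-ary infinitesimal bialgebra. -/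
theorem stmt15
    (μ : (Fin 2 → ℚ) →ₗ[ℚ] (Fin 2 → ℚ) →ₗ[ℚ] (Fin 2 → ℚ) →ₗ[ℚ] (Fin 2 → ℚ))
    (h1 : μ e₁ e₁ e₁ = e₂)
    (h0 : ∀ i j k : Fin 2, (i, j, k) ≠ (0, 0, 0) → μ (e i) (e j) (e k) = 0)
    (Δ : (Fin 2 → ℚ) →ₗ[ℚ] ((Fin 2 → ℚ) ⊗[ℚ] (Fin 2 → ℚ)) ⊗[ℚ] (Fin 2 → ℚ))
    (hΔ1 : Δ e₁ = (e₂ ⊗ₜ[ℚ] e₂) ⊗ₜ[ℚ] e₂) (hΔ2 : Δ e₂ = 0) :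
    (∀ x₁ x₂ x₃ x₄ x₅ : Fin 2 → ℚ,
      μ (μ x₁ x₂ x₃) x₄ x₅ + μ x₁ (μ x₂ x₃ x₄) x₅ + μ x₁ x₂ (μ x₃ x₄ x₅) = 0) ∧
    (coD1 Δ + coD2 Δ + coD3 Δ = 0) ∧
    Compat μ Δ := by
  have rep : ∀ x : Fin 2 → ℚ, x = x 0 • e₁ + x 1 • e₂ := by
    intro x; funext i; fin_cases i <;> simp [e₁, e₂]
  have h001 : μ e₁ e₁ e₂ = 0 := by simpa [e] using h0 0 0 1 (by decide)
  have h010 : μ e₁ e₂ e₁ = 0 := by simpa [e] using h0 0 1 0 (by decide)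
  have h011 : μ e₁ e₂ e₂ = 0 := by simpa [e] using h0 0 1 1 (by decide)
  have h100 : μ e₂ e₁ e₁ = 0 := by simpa [e] using h0 1 0 0 (by decide)
  have h101 : μ e₂ e₁ e₂ = 0 := by simpa [e] using h0 1 0 1 (by decide)
  have h110 : μ e₂ e₂ e₁ = 0 := by simpa [e] using h0 1 1 0 (by decide)
  have h111 : μ e₂ e₂ e₂ = 0 := by simpa [e] using h0 1 1 1 (by decide)
  have muval : ∀ x y z : Fin 2 → ℚ, μ x y z = (x 0 * y 0 * z 0) • e₂ := by
    intro x y z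
    conv_lhs => rw [rep x, rep y, rep z]
    simp only [map_add, map_smul, LinearMap.add_apply, LinearMap.smul_apply,
      h1, h001, h010, h011, h100, h101, h110, h111, smul_zero, add_zero, zero_add,
      smul_smul]
    ring_nf
  have e20 : e₂ 0 = 0 := by simp [e₂]
  have Δval : ∀ x : Fin 2 → ℚ, Δ x = x 0 • ((e₂ ⊗ₜ[ℚ] e₂) ⊗ₜ[ℚ] e₂) := by
    intro x
    conv_lhs => rw [rep x]
    simp [hΔ1, hΔ2]
  refine ⟨?_, ?_, ?_⟩
  · intro x₁ x₂ x₃ x₄ x₅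
    simp [muval, e20]
  · apply LinearMap.ext
    intro x
    simp only [LinearMap.add_apply, LinearMap.zero_apply, coD1, coD2, coD3,
      LinearMap.comp_apply, Δval, map_smul, map_tmul, hΔ2, LinearMap.id_apply,
      e20, zero_smul, zero_tmul, tmul_zero, smul_zero, map_zero, add_zero, zero_add]
  · intro x y z
    simp only [muval, map_smul, e20, mul_zero, zero_mul, zero_smul, hΔ2, smul_zero,
      Δval, map_tmul, LinearMap.id_apply, Mmul, Rmul, LinearMap.coe_mk, AddHom.coe_mk]
    simp [muval, e20]
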